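/- arXiv:0905.0537 — 2 statements merged into one kernel-verified Lean document; each statement's English description precedes it below -/
import Mathlib

section
/- Let M be a ℤ-module equipped with a symmetric ℤ-bilinear form B. Let Ẑ, Z̃ ∈ M, let E_1, …, E_s ∈ M, and let c_1, …, c_s be integers such that Ẑ − Z̃ = Σ_{j=1}^s c_j E_j. Suppose that for every j: (i) 2c_j = B(E_j, Z̃) − B(E_j, Ẑ), (ii) B(E_j, Ẑ) ∈ {−1, 0}, and (iii) B(E_j, Z̃) ∈ {−1, 0, 1}. Then B(Ẑ, Ẑ) = B(Z̃, Z̃). -/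
/-!
Since `B` is symmetric, `B Ẑ Ẑ - B Z̃ Z̃ = B (Ẑ - Z̃) (Ẑ + Z̃) = ∑ⱼ cⱼ (δⱼ + δ̃ⱼ)` with
`δⱼ = B Eⱼ Ẑ`, `δ̃ⱼ = B Eⱼ Z̃`. As `2 cⱼ = δ̃ⱼ - δⱼ`, each term is `(δ̃ⱼ² - δⱼ²) / 2`, and two
integers of absolute value at most one that are congruent mod 2 have equal squares.
-/

theorem LinearMap.apply_sub_apply_add_of_symm {R M : Type*} [CommRing R] [AddCommGroup M]
    [Module R M] (B : M →ₗ[R] M →ₗ[R] R) (hsymm : ∀ x y : M, B x y = B y x) (x y : M) :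
    B (x - y) (x + y) = B x x - B y y := by
  simp only [map_sub, map_add, LinearMap.sub_apply, hsymm y x]
  ring

theorem Int.sq_eq_sq_of_abs_le_one_of_two_dvd_sub {a b : ℤ} (ha : |a| ≤ 1) (hb : |b| ≤ 1)
    (h : 2 ∣ b - a) : a ^ 2 = b ^ 2 := by
  obtain ⟨ha₁, ha₂⟩ := abs_le.mp ha
  obtain ⟨hb₁, hb₂⟩ := abs_le.mp hb
  interval_cases a <;> interval_cases b <;> omega

theorem Int.mul_add_eq_zero_of_two_mul_eq_sub {a b c : ℤ} (ha : |a| ≤ 1) (hb : |b| ≤ 1)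
    (hc : 2 * c = b - a) : c * (a + b) = 0 := by
  have hsq := Int.sq_eq_sq_of_abs_le_one_of_two_dvd_sub ha hb ⟨c, hc.symm⟩
  have htwice : 2 * (c * (a + b)) = 0 := by
    rw [← mul_assoc, hc]
    linear_combination -hsq
  omega

/-- The key lattice computation: if `Ẑ - Z̃ = ∑ c j • E j` with
`2 * c j = B (E j) Z̃ - B (E j) Ẑ`, `B (E j) Ẑ ∈ {-1, 0}` and
`B (E j) Z̃ ∈ {-1, 0, 1}` for all `j`, then `B Ẑ Ẑ = B Z̃ Z̃`. -/
theorem stmt_2 {M : Type*} [AddCommGroup M] [Module ℤ M]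
    (B : M →ₗ[ℤ] M →ₗ[ℤ] ℤ) (hsymm : ∀ x y : M, B x y = B y x)
    (s : ℕ) (E : Fin s → M) (Zhat Ztil : M) (c : Fin s → ℤ)
    (hdiff : Zhat - Ztil = ∑ j, c j • E j)
    (hc : ∀ j, 2 * c j = B (E j) Ztil - B (E j) Zhat)
    (hZhat : ∀ j, B (E j) Zhat = -1 ∨ B (E j) Zhat = 0)
    (hZtil : ∀ j, B (E j) Ztil = -1 ∨ B (E j) Ztil = 0 ∨ B (E j) Ztil = 1) :
    B Zhat Zhat = B Ztil Ztil := by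
  have hterm (j : Fin s) : c j * (B (E j) Zhat + B (E j) Ztil) = 0 := by
    refine Int.mul_add_eq_zero_of_two_mul_eq_sub ?_ ?_ (hc j)
    · rcases hZhat j with h | h <;> simp [h]
    · rcases hZtil j with h | h | h <;> simp [h]
  have hdiff_sq : B Zhat Zhat - B Ztil Ztil = 0 := calc
    B Zhat Zhat - B Ztil Ztil = B (Zhat - Ztil) (Zhat + Ztil) :=
      (B.apply_sub_apply_add_of_symm hsymm Zhat Ztil).symm
    _ = ∑ j, c j * (B (E j) Zhat + B (E j) Ztil) := by
      simp [hdiff, map_sum, LinearMap.sum_apply]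
    _ = 0 := Finset.sum_eq_zero fun j _ => hterm j
  exact sub_eq_zero.mp hdiff_sq
end

section
/- Let M be a ℤ-module equipped with a symmetric ℤ-bilinear form B. Let E_1, …, E_s ∈ M satisfy B(E_j, E_j) = −2 for all j and B(E_j, E_{j'}) = 0 for j ≠ j'. Let W ∈ M, set k_j = B(E_j, W), n_j = ⌈k_j/2⌉, and Ẑ = W + Σ_j n_j E_j. Suppose there exist integers ñ_1, …, ñ_s such that the element Z̃ = W + Σ_j ñ_j E_j satisfies B(E_j, Z̃) ∈ {−1, 0, 1} for all j and B(Z̃, Z̃) = −2. Then B(Ẑ, Ẑ) = −2. -/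
/-! Put `c j = B (E j) Z̃ ∈ {-1, 0, 1}`. Since `B (E j) (∑ ñ i • E i) = -2 ñ j`, we get
`k j = c j + 2 ñ j`, hence `n j = ñ j + d j` with `d j = ⌈c j / 2⌉`, which is `1` if `c j = 1`
and `0` otherwise. So `Ẑ = Z̃ + ∑ d j • E j`, and expanding gives
`B Ẑ Ẑ = B Z̃ Z̃ + 2 ∑ d j (c j - d j) = B Z̃ Z̃`. -/

open Finset

section OrthogonalRoots

variable {ι M : Type*} [Fintype ι] [AddCommGroup M] [Module ℤ M] (B : M →ₗ[ℤ] M →ₗ[ℤ] ℤ)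
  {E : ι → M}

lemma apply_sum_smul_of_orthogonal (hdiag : ∀ j, B (E j) (E j) = -2)
    (horth : ∀ j j', j ≠ j' → B (E j) (E j') = 0) (m : ι → ℤ) (j : ι) :
    B (E j) (∑ i, m i • E i) = -2 * m j := by
  rw [map_sum, sum_eq_single_of_mem j (mem_univ j) fun i _ hij => ?_]
  · rw [map_zsmul, hdiag, smul_eq_mul, mul_comm]
  · rw [map_zsmul, horth j i (Ne.symm hij), smul_zero]

lemma apply_add_sum_smul_self (hsymm : ∀ x y : M, B x y = B y x)
    (hdiag : ∀ j, B (E j) (E j) = -2) (horth : ∀ j j', j ≠ j' → B (E j) (E j') = 0)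
    (Z : M) (d : ι → ℤ) :
    B (Z + ∑ i, d i • E i) (Z + ∑ i, d i • E i) =
      B Z Z + 2 * ∑ i, d i * (B (E i) Z - d i) := by
  have hcross : B Z (∑ i, d i • E i) = ∑ i, d i * B (E i) Z := by
    rw [map_sum]
    exact sum_congr rfl fun i _ => by rw [map_zsmul, smul_eq_mul, hsymm]
  have hsquare : B (∑ i, d i • E i) (∑ i, d i • E i) = ∑ i, d i * (-2 * d i) := by
    rw [map_sum B, LinearMap.sum_apply]
    simp only [map_zsmul, LinearMap.smul_apply, smul_eq_mul,
      apply_sum_smul_of_orthogonal B hdiag horth]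
  simp only [map_add, LinearMap.add_apply]
  rw [hsymm (∑ i, d i • E i) Z, hcross, hsquare, add_assoc, ← sum_add_distrib,
    ← sum_add_distrib, mul_sum]
  exact congrArg _ (sum_congr rfl fun i _ => by ring)

end OrthogonalRoots

lemma ceil_half_add_two_mul {K : Type*} [Field K] [LinearOrder K] [IsStrictOrderedRing K]
    [FloorRing K] (x : K) (a : ℤ) : ⌈(x + 2 * a) / 2⌉ = ⌈x / 2⌉ + a := by
  rw [add_div, mul_div_cancel_left₀ _ two_ne_zero, Int.ceil_add_intCast]

lemma ceil_half_mul_sub_ceil_half_eq_zero {c : ℤ} (hc : c = -1 ∨ c = 0 ∨ c = 1) :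
    ⌈(c : ℚ) / 2⌉ * (c - ⌈(c : ℚ) / 2⌉) = 0 := by
  rcases hc with rfl | rfl | rfl <;> norm_num

/-- If `Ẑ = W + ∑ n j • E j` is constructed via the ceiling recipe from
pairwise orthogonal `(-2)`-vectors `E j`, and there exist integers `ñ j`
such that `Z̃ = W + ∑ ñ j • E j` satisfies `B (E j) Z̃ ∈ {-1, 0, 1}` and
`B Z̃ Z̃ = -2`, then `B Ẑ Ẑ = -2`. -/
theorem stmt_3 {M : Type*} [AddCommGroup M] [Module ℤ M]
    (B : M →ₗ[ℤ] M →ₗ[ℤ] ℤ) (hsymm : ∀ x y : M, B x y = B y x)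
    (s : ℕ) (E : Fin s → M)
    (hdiag : ∀ j, B (E j) (E j) = -2)
    (horth : ∀ j j', j ≠ j' → B (E j) (E j') = 0)
    (W : M) (k : Fin s → ℤ) (hk : ∀ j, k j = B (E j) W)
    (n : Fin s → ℤ) (hn : ∀ j, n j = ⌈(k j : ℚ) / 2⌉)
    (Zhat : M) (hZhat : Zhat = W + ∑ j, n j • E j)
    (ntil : Fin s → ℤ) (Ztil : M) (hZtil : Ztil = W + ∑ j, ntil j • E j)
    (hbd : ∀ j, B (E j) Ztil = -1 ∨ B (E j) Ztil = 0 ∨ B (E j) Ztil = 1)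
    (hsq : B Ztil Ztil = -2) :
    B Zhat Zhat = -2 := by
  set c : Fin s → ℤ := fun j => B (E j) Ztil
  have hk' (j : Fin s) : k j = c j + 2 * ntil j := by
    simp only [c, hk, hZtil, map_add, apply_sum_smul_of_orthogonal B hdiag horth]
    ring
  have hn' (j : Fin s) : n j = ntil j + ⌈(c j : ℚ) / 2⌉ := by
    rw [hn, hk', Int.cast_add, Int.cast_mul, Int.cast_ofNat, ceil_half_add_two_mul, add_comm]
  have hZ : Zhat = Ztil + ∑ j, ⌈(c j : ℚ) / 2⌉ • E j := by
    simp only [hZhat, hZtil, hn', add_zsmul, sum_add_distrib, add_assoc]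
  rw [hZ, apply_add_sum_smul_self B hsymm hdiag horth, hsq,
    sum_eq_zero fun j _ => ceil_half_mul_sub_ceil_half_eq_zero (hbd j), mul_zero, add_zero]
end
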